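/- Realizing abstract executions concretely: For every abstract execution σ_init →* σ of a round-based register protocol, there exist n ∈ ℕ, a concrete configuration γ, and a concrete execution γ_init^n →* γ, such that the set of non-blank registers of γ equals W(σ) and the support of the location multiset of γ equals S(σ). Moreover n can be chosen at most 2·L + 1 where L is the number of moves in the abstract execution. -/
import Mathlib


open scoped Classical
set_option linter.unusedSectionVars false

/-- Actions of a round-based register protocol: round increment, read of value `x`
from register `α` of round `k - i`, and write of value `x` to register `α` of the
current round. -/
inductive Act (dim : ℕ) (D : Type) where
  | incr : Act dim D
  | read (i : ℕ) (α : Fin dim) (x : D) : Act dim D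
  | write (α : Fin dim) (x : D) : Act dim D

/-- A round-based register protocol. -/
structure Protocol (Q D : Type) (dim : ℕ) where
  q0 : Q
  d0 : D
  v : ℕ
  T : Set (Q × Act dim D × Q)
  read_le : ∀ q i α x q', (q, Act.read i α x, q') ∈ T → i ≤ v
  write_ne : ∀ q α x q', (q, Act.write α x, q') ∈ T → x ≠ d0

/-- A move: a transition together with the round on which it is performed. -/
abbrev Move (Q D : Type) (dim : ℕ) := (Q × Act dim D × Q) × ℕ

/-- A concrete configuration: a finitely supported multiset of locations and a
valuation of all registers. -/
structure Conc (Q D : Type) (dim : ℕ) where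
  loc : (Q × ℕ) →₀ ℕ
  reg : ℕ → Fin dim → D

variable {Q D : Type} {dim : ℕ}

/-- Value read from register `α` of round `k - i` (registers of negative rounds
hold the initial value). -/
def regVal (P : Protocol Q D dim) (γ : Conc Q D dim) (k i : ℕ) (α : Fin dim) : D :=
  if i ≤ k then γ.reg (k - i) α else P.d0

/-- Updating register `α` of round `k` to value `x`. -/
def updReg (r : ℕ → Fin dim → D) (k : ℕ) (α : Fin dim) (x : D) : ℕ → Fin dim → D :=
  fun k' α' => if k' = k ∧ α' = α then x else r k' α'

/-- Concrete step relation of a round-based register protocol. -/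
inductive ConcStep [DecidableEq Q] (P : Protocol Q D dim) :
    Conc Q D dim → Move Q D dim → Conc Q D dim → Prop where
  | incr {q q' : Q} {k : ℕ} {γ γ' : Conc Q D dim} :
      (q, Act.incr, q') ∈ P.T → 0 < γ.loc (q, k) →
      γ'.loc = γ.loc - Finsupp.single (q, k) 1 + Finsupp.single (q', k + 1) 1 →
      γ'.reg = γ.reg →
      ConcStep P γ ((q, Act.incr, q'), k) γ'
  | read {q q' : Q} {k i : ℕ} {α : Fin dim} {x : D} {γ γ' : Conc Q D dim} :
      (q, Act.read i α x, q') ∈ P.T → 0 < γ.loc (q, k) →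
      regVal P γ k i α = x →
      γ'.loc = γ.loc - Finsupp.single (q, k) 1 + Finsupp.single (q', k) 1 →
      γ'.reg = γ.reg →
      ConcStep P γ ((q, Act.read i α x, q'), k) γ'
  | write {q q' : Q} {k : ℕ} {α : Fin dim} {x : D} {γ γ' : Conc Q D dim} :
      (q, Act.write α x, q') ∈ P.T → 0 < γ.loc (q, k) →
      γ'.loc = γ.loc - Finsupp.single (q, k) 1 + Finsupp.single (q', k) 1 →
      γ'.reg = updReg γ.reg k α x →
      ConcStep P γ ((q, Act.write α x, q'), k) γ'

/-- Concrete reachability. -/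
def ConcReach [DecidableEq Q] (P : Protocol Q D dim) : Conc Q D dim → Conc Q D dim → Prop :=
  Relation.ReflTransGen (fun γ γ' => ∃ m, ConcStep P γ m γ')

/-- Initial concrete configuration with `n` processes. -/
noncomputable def Conc.init [DecidableEq Q] (P : Protocol Q D dim) (n : ℕ) : Conc Q D dim :=
  ⟨Finsupp.single (P.q0, 0) n, fun _ _ => P.d0⟩

/-- Number of processes of a concrete configuration. -/
def Conc.size (γ : Conc Q D dim) : ℕ := γ.loc.sum fun _ n => n

/-- Support of the location multiset of a concrete configuration. -/
def Conc.supp (γ : Conc Q D dim) : Set (Q × ℕ) := {l | 0 < γ.loc l}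

/-- The set of non-blank registers of a concrete configuration. -/
def Conc.nonBlank (P : Protocol Q D dim) (γ : Conc Q D dim) : Set (ℕ × Fin dim) :=
  {r | γ.reg r.1 r.2 ≠ P.d0}

/-- An abstract configuration: a set of locations and a set of written registers. -/
structure Abs (Q : Type) (dim : ℕ) where
  S : Set (Q × ℕ)
  W : Set (ℕ × Fin dim)

/-- Abstract step relation. -/
inductive AbsStep (P : Protocol Q D dim) :
    Abs Q dim → Move Q D dim → Abs Q dim → Prop where
  | incr {σ : Abs Q dim} {q q' : Q} {k : ℕ} :
      (q, Act.incr, q') ∈ P.T → (q, k) ∈ σ.S →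
      AbsStep P σ ((q, Act.incr, q'), k) ⟨σ.S ∪ {(q', k + 1)}, σ.W⟩
  | readBlank {σ : Abs Q dim} {q q' : Q} {k i : ℕ} {α : Fin dim} :
      (q, Act.read i α P.d0, q') ∈ P.T → (q, k) ∈ σ.S →
      (i ≤ k → (k - i, α) ∉ σ.W) →
      AbsStep P σ ((q, Act.read i α P.d0, q'), k) ⟨σ.S ∪ {(q', k)}, σ.W⟩
  | readVal {σ : Abs Q dim} {q q' q1 q2 : Q} {k i : ℕ} {α : Fin dim} {x : D} :
      x ≠ P.d0 → (q, Act.read i α x, q') ∈ P.T → (q, k) ∈ σ.S →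
      i ≤ k → (k - i, α) ∈ σ.W →
      (q1, Act.write α x, q2) ∈ P.T → (q1, k - i) ∈ σ.S → (q2, k - i) ∈ σ.S →
      AbsStep P σ ((q, Act.read i α x, q'), k) ⟨σ.S ∪ {(q', k)}, σ.W⟩
  | write {σ : Abs Q dim} {q q' : Q} {k : ℕ} {α : Fin dim} {x : D} :
      (q, Act.write α x, q') ∈ P.T → (q, k) ∈ σ.S →
      AbsStep P σ ((q, Act.write α x, q'), k) ⟨σ.S ∪ {(q', k)}, σ.W ∪ {(k, α)}⟩

/-- Abstract reachability. -/
def AbsReach (P : Protocol Q D dim) : Abs Q dim → Abs Q dim → Prop :=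
  Relation.ReflTransGen (fun σ σ' => ∃ m, AbsStep P σ m σ')

/-- The initial abstract configuration. -/
def Abs.init (P : Protocol Q D dim) : Abs Q dim := ⟨{(P.q0, 0)}, ∅⟩

/-- Abstract execution along a list of moves. -/
inductive AbsRun (P : Protocol Q D dim) : Abs Q dim → List (Move Q D dim) → Abs Q dim → Prop
  | nil (σ : Abs Q dim) : AbsRun P σ [] σ
  | cons {σ σ' σ'' : Abs Q dim} {m : Move Q D dim} {ms : List (Move Q D dim)} :
      AbsStep P σ m σ' → AbsRun P σ' ms σ'' → AbsRun P σ (m :: ms) σ''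

/-- First-write order of a schedule, given a set of already written registers. -/
noncomputable def fwo (W : Set (ℕ × Fin dim)) : List (Move Q D dim) → List (ℕ × Fin dim)
  | [] => []
  | ((_, Act.write α _, _), k) :: ms =>
      if (k, α) ∈ W then fwo W ms else (k, α) :: fwo (W ∪ {(k, α)}) ms
  | _ :: ms => fwo W ms

/-- Projection of a sequence of registers onto those whose round lies in `[k - v, k]`. -/
def winproj (v k : ℕ) (F : List (ℕ × Fin dim)) : List (ℕ × Fin dim) :=
  F.filter (fun r => decide (k - v ≤ r.1 ∧ r.1 ≤ k))


section Aux

variable [DecidableEq Q]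

lemma single_app (a ℓ : Q × ℕ) (n : ℕ) :
    (Finsupp.single a n) ℓ = if ℓ = a then n else 0 := by
  rw [Finsupp.single_apply]
  exact if_congr ⟨Eq.symm, Eq.symm⟩ rfl rfl

lemma locApp (f : (Q × ℕ) →₀ ℕ) (a b ℓ : Q × ℕ) (n : ℕ) :
    (f - Finsupp.single a n + Finsupp.single b n) ℓ
      = f ℓ - (if ℓ = a then n else 0) + (if ℓ = b then n else 0) := by
  rw [Finsupp.add_apply, Finsupp.tsub_apply, single_app, single_app]

lemma sum_add' (f g : (Q × ℕ) →₀ ℕ) :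
    ((f + g).sum fun _ v => v) = (f.sum fun _ v => v) + (g.sum fun _ v => v) :=
  Finsupp.sum_add_index (by simp) (by simp)

lemma sum_single' (a : Q × ℕ) (n : ℕ) :
    ((Finsupp.single a n).sum fun _ v => v) = n :=
  Finsupp.sum_single_index rfl

lemma le_sum' (c : (Q × ℕ) →₀ ℕ) (ℓ : Q × ℕ) : c ℓ ≤ c.sum fun _ v => v := by
  by_cases h : ℓ ∈ c.support
  · exact Finset.single_le_sum (fun _ _ => Nat.zero_le _) h
  · simp [Finsupp.notMem_support_iff.mp h]

lemma sum_erase_single (c : (Q × ℕ) →₀ ℕ) (ℓt ℓs : Q × ℕ) (t : ℕ) :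
    ((c.erase ℓt + Finsupp.single ℓs t).sum fun _ v => v)
      = (c.sum fun _ v => v) - c ℓt + t := by
  have h1 := sum_add' (c.erase ℓt) (Finsupp.single ℓt (c ℓt))
  rw [Finsupp.erase_add_single, sum_single'] at h1
  rw [sum_add', sum_single']
  omega

lemma cApp (c : (Q × ℕ) →₀ ℕ) (ℓt ℓs ℓ : Q × ℕ) (t : ℕ) :
    (c.erase ℓt + Finsupp.single ℓs t) ℓ
      = (if ℓ = ℓt then 0 else c ℓ) + (if ℓ = ℓs then t else 0) := by
  rw [Finsupp.add_apply, Finsupp.erase_apply, single_app]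

lemma supp_iff {γ : Conc Q D dim} {S : Set (Q × ℕ)} :
    Conc.supp γ = S ↔ ∀ ℓ, 0 < γ.loc ℓ ↔ ℓ ∈ S := by
  constructor
  · intro h ℓ; rw [← h]; rfl
  · intro h; ext ℓ; exact h ℓ

lemma nonBlank_mk (P : Protocol Q D dim) (f : (Q × ℕ) →₀ ℕ) (r : ℕ → Fin dim → D) :
    Conc.nonBlank P ⟨f, r⟩ = {p : ℕ × Fin dim | r p.1 p.2 ≠ P.d0} := rfl

lemma nonBlank_updReg (P : Protocol Q D dim) (γ : Conc Q D dim) (f : (Q × ℕ) →₀ ℕ)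
    (k : ℕ) (α : Fin dim) {x : D} (hx : x ≠ P.d0) :
    Conc.nonBlank P ⟨f, updReg γ.reg k α x⟩ = Conc.nonBlank P γ ∪ {(k, α)} := by
  ext ⟨k', α'⟩
  simp only [nonBlank_mk, Conc.nonBlank, updReg, Set.mem_setOf_eq, Set.mem_union,
    Set.mem_singleton_iff, Prod.mk.injEq]
  split_ifs with h
  · simp [hx, h.1, h.2]
  · constructor
    · exact Or.inl
    · rintro (h' | ⟨rfl, rfl⟩)
      · exact h'
      · exact absurd ⟨rfl, rfl⟩ h

lemma updReg_idem (r : ℕ → Fin dim → D) (k : ℕ) (α : Fin dim) (x : D) :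
    updReg (updReg r k α x) k α x = updReg r k α x := by
  funext a b
  simp only [updReg]
  split_ifs <;> rfl

lemma loc_step_le (f : (Q × ℕ) →₀ ℕ) (ℓs ℓt : Q × ℕ) (t : ℕ) (h : t + 1 ≤ f ℓs) :
    t ≤ (f - Finsupp.single ℓs 1 + Finsupp.single ℓt 1 : (Q × ℕ) →₀ ℕ) ℓs := by
  rw [locApp]
  rcases eq_or_ne ℓs ℓt with rfl | h2
  · simp <;> omega
  · simp [h2] <;> omega

lemma loc_step_comm (f : (Q × ℕ) →₀ ℕ) (ℓs ℓt : Q × ℕ) (t : ℕ) (h : t + 1 ≤ f ℓs) :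
    (f - Finsupp.single ℓs 1 + Finsupp.single ℓt 1) - Finsupp.single ℓs t + Finsupp.single ℓt t
      = f - Finsupp.single ℓs (t + 1) + Finsupp.single ℓt (t + 1) := by
  ext ℓ
  rw [locApp, locApp, locApp]
  rcases eq_or_ne ℓs ℓt with rfl | hst
  · rcases eq_or_ne ℓ ℓs with rfl | h1
    · simp <;> omega
    · simp [h1] <;> omega
  · rcases eq_or_ne ℓ ℓs with rfl | h1
    · simp [hst] <;> omega
    · rcases eq_or_ne ℓ ℓt with rfl | h2
      · simp [h1] <;> omega
      · simp [h1, h2] <;> omega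

lemma reach_repeat (P : Protocol Q D dim) (ℓs ℓt : Q × ℕ) (r : ℕ → Fin dim → D)
    (h1 : ∀ γ : Conc Q D dim, γ.reg = r → 0 < γ.loc ℓs →
      ∃ m, ConcStep P γ m ⟨γ.loc - Finsupp.single ℓs 1 + Finsupp.single ℓt 1, r⟩) :
    ∀ (t : ℕ) (γ : Conc Q D dim), γ.reg = r → t ≤ γ.loc ℓs →
      ConcReach P γ ⟨γ.loc - Finsupp.single ℓs t + Finsupp.single ℓt t, r⟩ := by
  intro t
  induction t with
  | zero =>
      intro γ hr _
      have h0 : (⟨γ.loc - Finsupp.single ℓs 0 + Finsupp.single ℓt 0, r⟩ : Conc Q D dim) = γ := by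
        cases γ
        simp_all
      rw [h0]
      exact Relation.ReflTransGen.refl
  | succ t ih =>
      intro γ hr hle
      obtain ⟨m, hm⟩ := h1 γ hr (by omega)
      have hrest := ih ⟨γ.loc - Finsupp.single ℓs 1 + Finsupp.single ℓt 1, r⟩ rfl
        (loc_step_le γ.loc ℓs ℓt t hle)
      rw [show ((⟨γ.loc - Finsupp.single ℓs 1 + Finsupp.single ℓt 1, r⟩ : Conc Q D dim).loc
            - Finsupp.single ℓs t + Finsupp.single ℓt t)
          = γ.loc - Finsupp.single ℓs (t + 1) + Finsupp.single ℓt (t + 1) from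
        loc_step_comm γ.loc ℓs ℓt t hle] at hrest
      exact Relation.ReflTransGen.head ⟨m, hm⟩ hrest

lemma reach_repeat_write (P : Protocol Q D dim) (q q' : Q) (k : ℕ) (α : Fin dim) (x : D)
    (hT : (q, Act.write α x, q') ∈ P.T) :
    ∀ (t : ℕ) (γ : Conc Q D dim), 0 < t → t ≤ γ.loc (q, k) →
      ConcReach P γ ⟨γ.loc - Finsupp.single (q, k) t + Finsupp.single (q', k) t,
        updReg γ.reg k α x⟩ := by
  intro t
  induction t with
  | zero => intro γ h; exact absurd h (lt_irrefl 0)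
  | succ s ih =>
      intro γ _ hle
      have hm : ConcStep P γ ((q, Act.write α x, q'), k)
          ⟨γ.loc - Finsupp.single (q, k) 1 + Finsupp.single (q', k) 1, updReg γ.reg k α x⟩ :=
        ConcStep.write hT (by omega) rfl rfl
      rcases Nat.eq_zero_or_pos s with rfl | hs
      · exact Relation.ReflTransGen.single ⟨_, hm⟩
      · have hrest := ih ⟨γ.loc - Finsupp.single (q, k) 1 + Finsupp.single (q', k) 1,
          updReg γ.reg k α x⟩ hs (loc_step_le γ.loc (q, k) (q', k) s hle)
        rw [show ((⟨γ.loc - Finsupp.single (q, k) 1 + Finsupp.single (q', k) 1,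
              updReg γ.reg k α x⟩ : Conc Q D dim).loc
              - Finsupp.single (q, k) s + Finsupp.single (q', k) s)
            = γ.loc - Finsupp.single (q, k) (s + 1) + Finsupp.single (q', k) (s + 1) from
          loc_step_comm γ.loc (q, k) (q', k) s hle] at hrest
        rw [show updReg (updReg γ.reg k α x) k α x = updReg γ.reg k α x from
          updReg_idem γ.reg k α x] at hrest
        exact Relation.ReflTransGen.head ⟨_, hm⟩ hrest

/-- The strengthened realizability property. -/
def Realiz (P : Protocol Q D dim) (σ : Abs Q dim) (b : ℕ) : Prop :=
  ∀ c : (Q × ℕ) →₀ ℕ, (∀ ℓ, 0 < c ℓ ↔ ℓ ∈ σ.S) →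
    ∃ n γ, n ≤ (c.sum fun _ v => v) + b ∧ ConcReach P (Conc.init P n) γ ∧
      Conc.nonBlank P γ = σ.W ∧ (∀ ℓ, c ℓ ≤ γ.loc ℓ) ∧ Conc.supp γ = σ.S

end Aux


section Main

variable [DecidableEq Q]

lemma realiz_absorb (P : Protocol Q D dim) (σ : Abs Q dim) (b : ℕ) (hR : Realiz P σ b)
    (ℓt : Q × ℕ) (hmem : ℓt ∈ σ.S) (W' : Set (ℕ × Fin dim)) (hW' : W' = σ.W) :
    Realiz P ⟨σ.S ∪ {ℓt}, W'⟩ (b + 1) := by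
  intro c' hc'
  simp only [Set.mem_union, Set.mem_singleton_iff] at hc'
  obtain ⟨n, γ, hn, hreach, hW, hcle, hsupp⟩ := hR c' (by
    intro ℓ
    rw [hc' ℓ]
    constructor
    · rintro (h | rfl)
      · exact h
      · exact hmem
    · exact Or.inl)
  refine ⟨n, γ, by omega, hreach, hW.trans hW'.symm, hcle, ?_⟩
  rw [hsupp]
  ext ℓ
  simp only [Set.mem_union, Set.mem_singleton_iff]
  constructor
  · exact Or.inl
  · rintro (h | rfl)
    · exact h
    · exact hmem

lemma realiz_nonwrite (P : Protocol Q D dim) (σ : Abs Q dim) (b : ℕ) (hR : Realiz P σ b)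
    (ℓs ℓt : Q × ℕ) (hqS : ℓs ∈ σ.S) (hmem : ℓt ∉ σ.S)
    (hbuild : ∀ r : ℕ → Fin dim → D, ({p : ℕ × Fin dim | r p.1 p.2 ≠ P.d0} = σ.W) →
      ∀ γ0 : Conc Q D dim, γ0.reg = r → 0 < γ0.loc ℓs →
        ∃ m, ConcStep P γ0 m ⟨γ0.loc - Finsupp.single ℓs 1 + Finsupp.single ℓt 1, r⟩) :
    Realiz P ⟨σ.S ∪ {ℓt}, σ.W⟩ (b + 1) := by
  intro c' hc'
  simp only [Set.mem_union, Set.mem_singleton_iff] at hc'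
  have hne : ℓs ≠ ℓt := fun h => hmem (h ▸ hqS)
  have ht : 0 < c' ℓt := (hc' ℓt).mpr (Or.inr rfl)
  have hcS : ∀ ℓ, 0 < (c'.erase ℓt + Finsupp.single ℓs (c' ℓt)) ℓ ↔ ℓ ∈ σ.S := by
    intro ℓ
    rw [cApp]
    rcases eq_or_ne ℓ ℓt with rfl | h1
    · rw [if_pos rfl, if_neg (Ne.symm hne)]
      simp [hmem]
    · rw [if_neg h1]
      rcases eq_or_ne ℓ ℓs with rfl | h2
      · rw [if_pos rfl]
        simp only [iff_true, hqS]
        omega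
      · rw [if_neg h2, add_zero, hc' ℓ]
        simp [h1]
  obtain ⟨n, γ, hn, hreach, hW, hcle, hsupp⟩ := hR _ hcS
  rw [supp_iff] at hsupp
  rw [sum_erase_single] at hn
  have hles := le_sum' c' ℓt
  have hcleApp : ∀ ℓ, (if ℓ = ℓt then 0 else c' ℓ) + (if ℓ = ℓs then c' ℓt else 0) ≤ γ.loc ℓ := by
    intro ℓ
    rw [← cApp]
    exact hcle ℓ
  have htle : c' ℓt ≤ γ.loc ℓs := by
    have h1 := hcleApp ℓs
    rw [if_pos rfl, if_neg hne] at h1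
    omega
  have hreach2 := reach_repeat P ℓs ℓt γ.reg (hbuild γ.reg hW) (c' ℓt) γ rfl htle
  have hfinle : ∀ ℓ, c' ℓ ≤
      (γ.loc - Finsupp.single ℓs (c' ℓt) + Finsupp.single ℓt (c' ℓt) : (Q × ℕ) →₀ ℕ) ℓ := by
    intro ℓ
    have h1 := hcleApp ℓ
    rw [locApp]
    rcases eq_or_ne ℓ ℓt with rfl | hA
    · rw [if_pos rfl] at h1 ⊢
      rw [if_neg (Ne.symm hne)]
      omega
    · rw [if_neg hA] at h1 ⊢
      omega
  have hfinsupp : ∀ ℓ,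
      0 < (γ.loc - Finsupp.single ℓs (c' ℓt) + Finsupp.single ℓt (c' ℓt) : (Q × ℕ) →₀ ℕ) ℓ ↔
        ℓ ∈ σ.S ∪ {ℓt} := by
    intro ℓ
    simp only [Set.mem_union, Set.mem_singleton_iff]
    constructor
    · intro hpos
      by_contra hcon
      push_neg at hcon
      obtain ⟨hnS, hnt⟩ := hcon
      have h0 : γ.loc ℓ = 0 := by
        by_contra h0
        exact hnS ((hsupp ℓ).mp (Nat.pos_of_ne_zero h0))
      rw [locApp, h0, if_neg hnt] at hpos
      omega
    · intro h
      rcases h with hS | rfl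
      · exact lt_of_lt_of_le ((hc' ℓ).mpr (Or.inl hS)) (hfinle ℓ)
      · exact lt_of_lt_of_le ((hc' ℓ).mpr (Or.inr rfl)) (hfinle ℓ)
  exact ⟨n, ⟨γ.loc - Finsupp.single ℓs (c' ℓt) + Finsupp.single ℓt (c' ℓt), γ.reg⟩,
    by omega, hreach.trans hreach2, hW, hfinle, supp_iff.mpr hfinsupp⟩

lemma realiz_readVal (P : Protocol Q D dim) (σ : Abs Q dim) (b : ℕ) (hR : Realiz P σ b)
    (ℓs ℓt ℓw ℓw2 : Q × ℕ) (hqS : ℓs ∈ σ.S) (hw1 : ℓw ∈ σ.S) (hw2 : ℓw2 ∈ σ.S)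
    (hmem : ℓt ∉ σ.S) (wr : ℕ) (α : Fin dim) (x : D)
    (hwbuild : ∀ γ0 : Conc Q D dim, 0 < γ0.loc ℓw →
      ∃ m, ConcStep P γ0 m ⟨γ0.loc - Finsupp.single ℓw 1 + Finsupp.single ℓw2 1,
        updReg γ0.reg wr α x⟩)
    (hWmem : (wr, α) ∈ σ.W) (hx : x ≠ P.d0)
    (hrbuild : ∀ r : ℕ → Fin dim → D, r wr α = x → ∀ γ0 : Conc Q D dim, γ0.reg = r →
      0 < γ0.loc ℓs →
      ∃ m, ConcStep P γ0 m ⟨γ0.loc - Finsupp.single ℓs 1 + Finsupp.single ℓt 1, r⟩) :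
    Realiz P ⟨σ.S ∪ {ℓt}, σ.W⟩ (b + 1) := by
  intro c' hc'
  simp only [Set.mem_union, Set.mem_singleton_iff] at hc'
  have hne : ℓs ≠ ℓt := fun h => hmem (h ▸ hqS)
  have hnew : ℓw ≠ ℓt := fun h => hmem (h ▸ hw1)
  have hnew2 : ℓw2 ≠ ℓt := fun h => hmem (h ▸ hw2)
  have ht : 0 < c' ℓt := (hc' ℓt).mpr (Or.inr rfl)
  have hcApp : ∀ ℓ, (c'.erase ℓt + Finsupp.single ℓs (c' ℓt) + Finsupp.single ℓw 1 : (Q × ℕ) →₀ ℕ) ℓ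
      = (if ℓ = ℓt then 0 else c' ℓ) + (if ℓ = ℓs then c' ℓt else 0)
        + (if ℓ = ℓw then 1 else 0) := by
    intro ℓ
    rw [Finsupp.add_apply, cApp, single_app]
  have hcS : ∀ ℓ,
      0 < (c'.erase ℓt + Finsupp.single ℓs (c' ℓt) + Finsupp.single ℓw 1 : (Q × ℕ) →₀ ℕ) ℓ ↔ ℓ ∈ σ.S := by
    intro ℓ
    rw [hcApp]
    rcases eq_or_ne ℓ ℓt with rfl | h1
    · rw [if_pos rfl, if_neg (Ne.symm hne), if_neg (Ne.symm hnew)]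
      simp [hmem]
    · rw [if_neg h1]
      constructor
      · intro hpos
        rcases eq_or_ne ℓ ℓs with rfl | h2
        · exact hqS
        · rcases eq_or_ne ℓ ℓw with rfl | h3
          · exact hw1
          · rw [if_neg h2, if_neg h3] at hpos
            simp only [add_zero] at hpos
            rcases (hc' ℓ).mp hpos with h | rfl
            · exact h
            · exact absurd rfl h1
      · intro hS
        have h4 : 0 < c' ℓ := (hc' ℓ).mpr (Or.inl hS)
        omega
  obtain ⟨n, γ, hn, hreach, hW, hcle, hsupp⟩ := hR _ hcS
  rw [supp_iff] at hsupp
  rw [sum_add', sum_erase_single, sum_single'] at hn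
  have hles := le_sum' c' ℓt
  have hcleApp : ∀ ℓ, (if ℓ = ℓt then 0 else c' ℓ) + (if ℓ = ℓs then c' ℓt else 0)
      + (if ℓ = ℓw then 1 else 0) ≤ γ.loc ℓ := by
    intro ℓ
    rw [← hcApp]
    exact hcle ℓ
  have hposw : 0 < γ.loc ℓw := by
    have h1 := hcleApp ℓw
    rw [if_pos rfl] at h1
    omega
  obtain ⟨mw, hmw⟩ := hwbuild γ hposw
  have hrbuild' := hrbuild (updReg γ.reg wr α x) (by simp [updReg])
  have htle : c' ℓt ≤ (γ.loc - Finsupp.single ℓw 1 + Finsupp.single ℓw2 1 : (Q × ℕ) →₀ ℕ) ℓs := by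
    have h1 := hcleApp ℓs
    rw [if_pos rfl, if_neg hne] at h1
    rw [locApp]
    omega
  have hreach2 := reach_repeat P ℓs ℓt (updReg γ.reg wr α x) hrbuild' (c' ℓt)
    ⟨γ.loc - Finsupp.single ℓw 1 + Finsupp.single ℓw2 1, updReg γ.reg wr α x⟩ rfl htle
  have hfinle : ∀ ℓ, c' ℓ ≤
      ((γ.loc - Finsupp.single ℓw 1 + Finsupp.single ℓw2 1)
        - Finsupp.single ℓs (c' ℓt) + Finsupp.single ℓt (c' ℓt) : (Q × ℕ) →₀ ℕ) ℓ := by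
    intro ℓ
    have h1 := hcleApp ℓ
    rw [locApp, locApp]
    rcases eq_or_ne ℓ ℓt with rfl | hA
    · rw [if_pos rfl] at h1 ⊢
      rw [if_neg (Ne.symm hne), if_neg (Ne.symm hnew), if_neg (Ne.symm hnew2)]
      omega
    · rw [if_neg hA] at h1 ⊢
      omega
  have hfinsupp : ∀ ℓ,
      0 < ((γ.loc - Finsupp.single ℓw 1 + Finsupp.single ℓw2 1)
        - Finsupp.single ℓs (c' ℓt) + Finsupp.single ℓt (c' ℓt) : (Q × ℕ) →₀ ℕ) ℓ ↔
        ℓ ∈ σ.S ∪ {ℓt} := by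
    intro ℓ
    simp only [Set.mem_union, Set.mem_singleton_iff]
    constructor
    · intro hpos
      by_contra hcon
      push_neg at hcon
      obtain ⟨hnS, hnt⟩ := hcon
      have hnw2 : ℓ ≠ ℓw2 := fun h => hnS (h ▸ hw2)
      have h0 : γ.loc ℓ = 0 := by
        by_contra h0
        exact hnS ((hsupp ℓ).mp (Nat.pos_of_ne_zero h0))
      rw [locApp, locApp, h0, if_neg hnt, if_neg hnw2] at hpos
      omega
    · intro h
      rcases h with hS | rfl
      · exact lt_of_lt_of_le ((hc' ℓ).mpr (Or.inl hS)) (hfinle ℓ)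
      · exact lt_of_lt_of_le ((hc' ℓ).mpr (Or.inr rfl)) (hfinle ℓ)
  refine ⟨n, ⟨(γ.loc - Finsupp.single ℓw 1 + Finsupp.single ℓw2 1)
      - Finsupp.single ℓs (c' ℓt) + Finsupp.single ℓt (c' ℓt), updReg γ.reg wr α x⟩,
    by omega, (hreach.trans (Relation.ReflTransGen.single ⟨mw, hmw⟩)).trans hreach2,
    ?_, hfinle, supp_iff.mpr hfinsupp⟩
  rw [nonBlank_updReg P γ _ wr α hx, hW]
  ext p
  simp only [Set.mem_union, Set.mem_singleton_iff]
  constructor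
  · rintro (h | rfl)
    · exact h
    · exact hWmem
  · exact Or.inl

lemma realiz_write_fresh (P : Protocol Q D dim) (σ : Abs Q dim) (b : ℕ) (hR : Realiz P σ b)
    (ℓs ℓt : Q × ℕ) (hqS : ℓs ∈ σ.S) (hmem : ℓt ∉ σ.S)
    (k : ℕ) (α : Fin dim) (x : D) (hx : x ≠ P.d0)
    (hrep : ∀ (t : ℕ) (γ : Conc Q D dim), 0 < t → t ≤ γ.loc ℓs →
      ConcReach P γ ⟨γ.loc - Finsupp.single ℓs t + Finsupp.single ℓt t,
        updReg γ.reg k α x⟩) :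
    Realiz P ⟨σ.S ∪ {ℓt}, σ.W ∪ {(k, α)}⟩ (b + 1) := by
  intro c' hc'
  simp only [Set.mem_union, Set.mem_singleton_iff] at hc'
  have hne : ℓs ≠ ℓt := fun h => hmem (h ▸ hqS)
  have ht : 0 < c' ℓt := (hc' ℓt).mpr (Or.inr rfl)
  have hcS : ∀ ℓ, 0 < (c'.erase ℓt + Finsupp.single ℓs (c' ℓt)) ℓ ↔ ℓ ∈ σ.S := by
    intro ℓ
    rw [cApp]
    rcases eq_or_ne ℓ ℓt with rfl | h1
    · rw [if_pos rfl, if_neg (Ne.symm hne)]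
      simp [hmem]
    · rw [if_neg h1]
      rcases eq_or_ne ℓ ℓs with rfl | h2
      · rw [if_pos rfl]
        simp only [iff_true, hqS]
        omega
      · rw [if_neg h2, add_zero, hc' ℓ]
        simp [h1]
  obtain ⟨n, γ, hn, hreach, hW, hcle, hsupp⟩ := hR _ hcS
  rw [supp_iff] at hsupp
  rw [sum_erase_single] at hn
  have hles := le_sum' c' ℓt
  have hcleApp : ∀ ℓ, (if ℓ = ℓt then 0 else c' ℓ) + (if ℓ = ℓs then c' ℓt else 0) ≤ γ.loc ℓ := by
    intro ℓ
    rw [← cApp]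
    exact hcle ℓ
  have htle : c' ℓt ≤ γ.loc ℓs := by
    have h1 := hcleApp ℓs
    rw [if_pos rfl, if_neg hne] at h1
    omega
  have hreach2 := hrep (c' ℓt) γ ht htle
  have hfinle : ∀ ℓ, c' ℓ ≤
      (γ.loc - Finsupp.single ℓs (c' ℓt) + Finsupp.single ℓt (c' ℓt) : (Q × ℕ) →₀ ℕ) ℓ := by
    intro ℓ
    have h1 := hcleApp ℓ
    rw [locApp]
    rcases eq_or_ne ℓ ℓt with rfl | hA
    · rw [if_pos rfl] at h1 ⊢
      rw [if_neg (Ne.symm hne)]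
      omega
    · rw [if_neg hA] at h1 ⊢
      omega
  have hfinsupp : ∀ ℓ,
      0 < (γ.loc - Finsupp.single ℓs (c' ℓt) + Finsupp.single ℓt (c' ℓt) : (Q × ℕ) →₀ ℕ) ℓ ↔
        ℓ ∈ σ.S ∪ {ℓt} := by
    intro ℓ
    simp only [Set.mem_union, Set.mem_singleton_iff]
    constructor
    · intro hpos
      by_contra hcon
      push_neg at hcon
      obtain ⟨hnS, hnt⟩ := hcon
      have h0 : γ.loc ℓ = 0 := by
        by_contra h0
        exact hnS ((hsupp ℓ).mp (Nat.pos_of_ne_zero h0))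
      rw [locApp, h0, if_neg hnt] at hpos
      omega
    · intro h
      rcases h with hS | rfl
      · exact lt_of_lt_of_le ((hc' ℓ).mpr (Or.inl hS)) (hfinle ℓ)
      · exact lt_of_lt_of_le ((hc' ℓ).mpr (Or.inr rfl)) (hfinle ℓ)
  refine ⟨n, ⟨γ.loc - Finsupp.single ℓs (c' ℓt) + Finsupp.single ℓt (c' ℓt),
      updReg γ.reg k α x⟩,
    by omega, hreach.trans hreach2, ?_, hfinle, supp_iff.mpr hfinsupp⟩
  rw [nonBlank_updReg P γ _ k α hx, hW]

lemma realiz_write_old (P : Protocol Q D dim) (σ : Abs Q dim) (b : ℕ) (hR : Realiz P σ b)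
    (ℓs ℓt : Q × ℕ) (hqS : ℓs ∈ σ.S) (hmem : ℓt ∈ σ.S)
    (k : ℕ) (α : Fin dim) (x : D) (hx : x ≠ P.d0)
    (hrep : ∀ (t : ℕ) (γ : Conc Q D dim), 0 < t → t ≤ γ.loc ℓs →
      ConcReach P γ ⟨γ.loc - Finsupp.single ℓs t + Finsupp.single ℓt t,
        updReg γ.reg k α x⟩) :
    Realiz P ⟨σ.S ∪ {ℓt}, σ.W ∪ {(k, α)}⟩ (b + 1) := by
  intro c' hc'
  simp only [Set.mem_union, Set.mem_singleton_iff] at hc'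
  have hcApp : ∀ ℓ, (c' + Finsupp.single ℓs 1 : (Q × ℕ) →₀ ℕ) ℓ = c' ℓ + (if ℓ = ℓs then 1 else 0) := by
    intro ℓ
    rw [Finsupp.add_apply, single_app]
  have hcS : ∀ ℓ, 0 < (c' + Finsupp.single ℓs 1 : (Q × ℕ) →₀ ℕ) ℓ ↔ ℓ ∈ σ.S := by
    intro ℓ
    rw [hcApp]
    rcases eq_or_ne ℓ ℓs with rfl | h2
    · simp [hqS]
    · rw [if_neg h2, add_zero, hc' ℓ]
      constructor
      · rintro (h | rfl)
        · exact h
        · exact hmem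
      · exact Or.inl
  obtain ⟨n, γ, hn, hreach, hW, hcle, hsupp⟩ := hR _ hcS
  rw [supp_iff] at hsupp
  rw [sum_add', sum_single'] at hn
  have hcleApp : ∀ ℓ, c' ℓ + (if ℓ = ℓs then 1 else 0) ≤ γ.loc ℓ := by
    intro ℓ
    rw [← hcApp]
    exact hcle ℓ
  have htle : 1 ≤ γ.loc ℓs := by
    have h1 := hcleApp ℓs
    rw [if_pos rfl] at h1
    omega
  have hreach2 := hrep 1 γ one_pos htle
  have hfinle : ∀ ℓ, c' ℓ ≤
      (γ.loc - Finsupp.single ℓs 1 + Finsupp.single ℓt 1 : (Q × ℕ) →₀ ℕ) ℓ := by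
    intro ℓ
    have h1 := hcleApp ℓ
    rw [locApp]
    rcases eq_or_ne ℓ ℓs with rfl | hA
    · rw [if_pos rfl] at h1 ⊢
      omega
    · rw [if_neg hA] at h1 ⊢
      omega
  have hfinsupp : ∀ ℓ,
      0 < (γ.loc - Finsupp.single ℓs 1 + Finsupp.single ℓt 1 : (Q × ℕ) →₀ ℕ) ℓ ↔
        ℓ ∈ σ.S ∪ {ℓt} := by
    intro ℓ
    simp only [Set.mem_union, Set.mem_singleton_iff]
    constructor
    · intro hpos
      by_contra hcon
      push_neg at hcon
      obtain ⟨hnS, hnt⟩ := hcon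
      have h0 : γ.loc ℓ = 0 := by
        by_contra h0
        exact hnS ((hsupp ℓ).mp (Nat.pos_of_ne_zero h0))
      rw [locApp, h0, if_neg hnt] at hpos
      omega
    · intro h
      have hS : ℓ ∈ σ.S := by
        rcases h with h | rfl
        · exact h
        · exact hmem
      exact lt_of_lt_of_le ((hc' ℓ).mpr (Or.inl hS)) (hfinle ℓ)
  refine ⟨n, ⟨γ.loc - Finsupp.single ℓs 1 + Finsupp.single ℓt 1, updReg γ.reg k α x⟩,
    by omega, hreach.trans hreach2, ?_, hfinle, supp_iff.mpr hfinsupp⟩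
  rw [nonBlank_updReg P γ _ k α hx, hW]

lemma step_real {P : Protocol Q D dim} {σ σ' : Abs Q dim} {m : Move Q D dim} {b : ℕ}
    (hstep : AbsStep P σ m σ') (hR : Realiz P σ b) : Realiz P σ' (b + 1) := by
  cases hstep with
  | @incr q q' k hT hqS =>
      by_cases hmem : (q', k + 1) ∈ σ.S
      · exact realiz_absorb P σ b hR (q', k + 1) hmem σ.W rfl
      · refine realiz_nonwrite P σ b hR (q, k) (q', k + 1) hqS hmem ?_
        intro r hr γ0 hreg hpos
        exact ⟨_, ConcStep.incr hT hpos rfl hreg.symm⟩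
  | @readBlank q q' k i α hT hqS hbl =>
      by_cases hmem : (q', k) ∈ σ.S
      · exact realiz_absorb P σ b hR (q', k) hmem σ.W rfl
      · refine realiz_nonwrite P σ b hR (q, k) (q', k) hqS hmem ?_
        intro r hr γ0 hreg hpos
        refine ⟨_, ConcStep.read hT hpos ?_ rfl hreg.symm⟩
        unfold regVal
        split_ifs with hik
        · rw [hreg]
          by_contra hne0
          exact hbl hik (by rw [← hr]; exact hne0)
        · rfl
  | @readVal q q' q1 q2 k i α x hx hT hqS hik hWmem hTw hww1 hww2 =>
      by_cases hmem : (q', k) ∈ σ.S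
      · exact realiz_absorb P σ b hR (q', k) hmem σ.W rfl
      · refine realiz_readVal P σ b hR (q, k) (q', k) (q1, k - i) (q2, k - i)
          hqS hww1 hww2 hmem (k - i) α x ?_ hWmem hx ?_
        · intro γ0 hpos
          exact ⟨_, ConcStep.write hTw hpos rfl rfl⟩
        · intro r hrx γ0 hreg hpos
          refine ⟨_, ConcStep.read hT hpos ?_ rfl hreg.symm⟩
          unfold regVal
          rw [if_pos hik, hreg, hrx]
  | @write q q' k α x hT hqS =>
      have hx : x ≠ P.d0 := P.write_ne q α x q' hT
      have hrep := reach_repeat_write P q q' k α x hT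
      by_cases hmem : (q', k) ∈ σ.S
      · exact realiz_write_old P σ b hR (q, k) (q', k) hqS hmem k α x hx hrep
      · exact realiz_write_fresh P σ b hR (q, k) (q', k) hqS hmem k α x hx hrep

lemma real_mono {P : Protocol Q D dim} {σ : Abs Q dim} {b b' : ℕ}
    (h : Realiz P σ b) (hb : b ≤ b') : Realiz P σ b' := by
  intro c hc
  obtain ⟨n, γ, hn, h1, h2, h3, h4⟩ := h c hc
  exact ⟨n, γ, by omega, h1, h2, h3, h4⟩

lemma run_real {P : Protocol Q D dim} {σ σ' : Abs Q dim} {ms : List (Move Q D dim)}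
    (hrun : AbsRun P σ ms σ') :
    ∀ b : ℕ, Realiz P σ b → Realiz P σ' (b + ms.length) := by
  induction hrun with
  | nil => intro b h; simpa using h
  | @cons _ _ _ _ ms' hst hrun ih =>
      intro b h
      have h2 := ih (b + 1) (step_real hst h)
      refine real_mono h2 ?_
      simp [List.length_cons]
      omega

lemma base_real (P : Protocol Q D dim) : Realiz P (Abs.init P) 0 := by
  intro c hc
  simp only [Abs.init, Set.mem_singleton_iff] at hc
  have hpos : 0 < c (P.q0, 0) := (hc _).mpr rfl
  have hceq : c = Finsupp.single (P.q0, 0) (c (P.q0, 0)) := by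
    ext ℓ
    rw [single_app]
    rcases eq_or_ne ℓ (P.q0, 0) with rfl | h
    · rw [if_pos rfl]
    · rw [if_neg h]
      have h2 : ¬ 0 < c ℓ := fun hp => h ((hc ℓ).mp hp)
      omega
  have hsum : (c.sum fun _ v => v) = c (P.q0, 0) := by
    conv_lhs => rw [hceq]
    rw [sum_single']
  refine ⟨c (P.q0, 0), Conc.init P (c (P.q0, 0)), by omega, Relation.ReflTransGen.refl, ?_, ?_, ?_⟩
  · ext p
    simp [Conc.nonBlank, Conc.init, Abs.init]
  · intro ℓ
    show c ℓ ≤ (Finsupp.single (P.q0, 0) (c (P.q0, 0))) ℓ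
    exact le_of_eq (by conv_lhs => rw [hceq])
  · rw [supp_iff]
    intro ℓ
    show 0 < (Finsupp.single (P.q0, 0) (c (P.q0, 0))) ℓ ↔ ℓ ∈ (Abs.init P).S
    rw [single_app]
    simp only [Abs.init, Set.mem_singleton_iff]
    rcases eq_or_ne ℓ (P.q0, 0) with rfl | h
    · rw [if_pos rfl]
      simp [hpos]
    · rw [if_neg h]
      simp [h]

lemma absStep_S {P : Protocol Q D dim} {σ σ' : Abs Q dim} {m : Move Q D dim}
    (h : AbsStep P σ m σ') : ∃ ℓ, σ'.S = σ.S ∪ {ℓ} := by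
  cases h <;> exact ⟨_, rfl⟩

lemma exists_matching {P : Protocol Q D dim} {σ σ' : Abs Q dim} {ms : List (Move Q D dim)}
    (hrun : AbsRun P σ ms σ') :
    ∀ c : (Q × ℕ) →₀ ℕ, (∀ ℓ, 0 < c ℓ ↔ ℓ ∈ σ.S) →
      ∃ c' : (Q × ℕ) →₀ ℕ, (∀ ℓ, 0 < c' ℓ ↔ ℓ ∈ σ'.S) ∧
        (c'.sum fun _ v => v) ≤ (c.sum fun _ v => v) + ms.length := by
  induction hrun with
  | nil =>
      intro c hc
      exact ⟨c, hc, by simp⟩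
  | @cons _ _ _ _ ms' hst hrun ih =>
      intro c hc
      obtain ⟨ℓ0, hℓ0⟩ := absStep_S hst
      obtain ⟨c', hc', hsum⟩ := ih (c + Finsupp.single ℓ0 1) (by
        intro ℓ'
        rw [hℓ0, Finsupp.add_apply, single_app]
        simp only [Set.mem_union, Set.mem_singleton_iff]
        rcases eq_or_ne ℓ' ℓ0 with rfl | h
        · rw [if_pos rfl]
          simp
        · rw [if_neg h, add_zero, hc ℓ']
          simp [h])
      refine ⟨c', hc', ?_⟩
      rw [sum_add', sum_single'] at hsum
      simp only [List.length_cons]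
      omega

end Main

/-- Realizing abstract executions concretely (Lemma A.2). -/
theorem realize_abstract_concretely {Q D : Type} {dim : ℕ} [DecidableEq Q]
    (P : Protocol Q D dim) (ms : List (Move Q D dim)) (σ : Abs Q dim)
    (hrun : AbsRun P (Abs.init P) ms σ) :
    ∃ n : ℕ, n ≤ 2 * ms.length + 1 ∧
      ∃ γ : Conc Q D dim,
        ConcReach P (Conc.init P n) γ ∧
        Conc.nonBlank P γ = σ.W ∧
        γ.supp = σ.S := by
  have hreal := run_real hrun 0 (base_real P)
  obtain ⟨c', hc', hsum⟩ := exists_matching hrun (Finsupp.single (P.q0, 0) 1) (by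
    intro ℓ
    rw [single_app]
    simp only [Abs.init, Set.mem_singleton_iff]
    rcases eq_or_ne ℓ (P.q0, 0) with rfl | h
    · rw [if_pos rfl]
      simp
    · rw [if_neg h]
      simp [h])
  obtain ⟨n, γ, hn, hreach, hW, _, hsupp⟩ := hreal c' hc'
  rw [sum_single'] at hsum
  exact ⟨n, by omega, γ, hreach, hW, hsupp⟩
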